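/- The flatness of the KZ connection: the $\mathrm{End}(W)$-valued 1-form $\Gamma = \sum_{i<j} \frac{dz_i - dz_j}{z_i - z_j}\Omega_{ij}$ satisfies $d\Gamma = 0$ and $\Gamma \wedge \Gamma = 0$ whenever the $\Omega_{ij}$ satisfy the infinitesimal braid relations $[\Omega_{ij},\Omega_{kl}]=0$ ($i,j,k,l$ distinct) and $[\Omega_{ij}, \Omega_{ik}+\Omega_{jk}]=0$ ($i,j,k$ distinct). -/

import Mathlib

open scoped BigOperators

noncomputable section

variable {n : ℕ} {A : Type*} [NormedRing A] [NormedAlgebra ℂ A]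

/-- The KZ connection 1-form `Γ = ∑_{i<j} (dz_i - dz_j)/(z_i - z_j) · Ω_{ij}`,
evaluated at the point `z` of configuration space on the tangent vector `u`:
`Γ_z(u) = ∑_{i<j} ((u i - u j)/(z i - z j)) • Ω i j`. -/
def KZform (Ω : Fin n → Fin n → A) (z u : Fin n → ℂ) : A :=
  ∑ i : Fin n, ∑ j : Fin n,
    if i < j then ((u i - u j) / (z i - z j)) • Ω i j else 0

set_option linter.unusedSectionVars false

/-- symmetrized summand of the KZ form, over ordered pairs. -/
def au (Ω : Fin n → Fin n → A) (z u : Fin n → ℂ) (i j : Fin n) : A :=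
  if i ≠ j then ((u i - u j) / (z i - z j)) • Ω i j else 0

lemma au_same (Ω : Fin n → Fin n → A) (z u : Fin n → ℂ) (i : Fin n) :
    au Ω z u i i = 0 := by simp [au]

lemma au_symm (Ω : Fin n → Fin n → A) (hsym : ∀ i j, Ω i j = Ω j i)
    (z u : Fin n → ℂ) (i j : Fin n) : au Ω z u i j = au Ω z u j i := by
  unfold au
  rcases eq_or_ne i j with h | h
  · simp [h]
  · rw [if_pos h, if_pos h.symm, hsym i j, ← neg_sub (u j), ← neg_sub (z j), neg_div_neg_eq]

lemma au_eq (Ω : Fin n → Fin n → A) (z u : Fin n → ℂ) {i j : Fin n} (h : i ≠ j) :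
    au Ω z u i j = ((u i - u j) / (z i - z j)) • Ω i j := if_pos h

lemma smul_comm_sub (α β : ℂ) (M N : A) :
    (α • M) * (β • N) - (β • N) * (α • M) = (α * β) • (M * N - N * M) := by
  rw [smul_mul_smul_comm, smul_mul_smul_comm, mul_comm β α, smul_sub]

lemma smul_mul_commute {α β : ℂ} {M N : A} (h : M * N = N * M) :
    (α • M) * (β • N) = (β • N) * (α • M) := by
  rw [smul_mul_smul_comm, smul_mul_smul_comm, mul_comm β α, h]

lemma comm3a (Ω : Fin n → Fin n → A)
    (h3 : ∀ i j k : Fin n, i ≠ j → i ≠ k → j ≠ k →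
      Ω i j * (Ω i k + Ω j k) = (Ω i k + Ω j k) * Ω i j)
    {a b c : Fin n} (hab : a ≠ b) (hac : a ≠ c) (hbc : b ≠ c) :
    Ω a b * Ω b c - Ω b c * Ω a b = -(Ω a b * Ω a c - Ω a c * Ω a b) := by
  have h := h3 a b c hab hac hbc
  rw [mul_add, add_mul] at h
  calc Ω a b * Ω b c - Ω b c * Ω a b
      = (Ω a b * Ω a c + Ω a b * Ω b c) - Ω a b * Ω a c - Ω b c * Ω a b := by abel
    _ = (Ω a c * Ω a b + Ω b c * Ω a b) - Ω a b * Ω a c - Ω b c * Ω a b := by rw [h]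
    _ = -(Ω a b * Ω a c - Ω a c * Ω a b) := by abel

lemma comm3b (Ω : Fin n → Fin n → A) (hsym : ∀ i j, Ω i j = Ω j i)
    (h3 : ∀ i j k : Fin n, i ≠ j → i ≠ k → j ≠ k →
      Ω i j * (Ω i k + Ω j k) = (Ω i k + Ω j k) * Ω i j)
    {a b c : Fin n} (hab : a ≠ b) (hac : a ≠ c) (hbc : b ≠ c) :
    Ω a c * Ω b c - Ω b c * Ω a c = Ω a b * Ω a c - Ω a c * Ω a b := by
  have h := h3 a c b hac hab hbc.symm
  rw [hsym c b, mul_add, add_mul] at h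
  calc Ω a c * Ω b c - Ω b c * Ω a c
      = (Ω a c * Ω a b + Ω a c * Ω b c) - Ω a c * Ω a b - Ω b c * Ω a c := by abel
    _ = (Ω a b * Ω a c + Ω b c * Ω a c) - Ω a c * Ω a b - Ω b c * Ω a c := by rw [h]
    _ = Ω a b * Ω a c - Ω a c * Ω a b := by abel

lemma arnoldE (X Y W U1 U2 U3 V1 V2 V3 : ℂ) (hxy : X ≠ Y) (hxw : X ≠ W) (hyw : Y ≠ W) :
    ((U1-U2)/(X-Y)) * ((V1-V3)/(X-W)) - ((U1-U3)/(X-W)) * ((V1-V2)/(X-Y))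
    - ((U1-U2)/(X-Y)) * ((V2-V3)/(Y-W)) + ((U2-U3)/(Y-W)) * ((V1-V2)/(X-Y))
    + ((U1-U3)/(X-W)) * ((V2-V3)/(Y-W)) - ((U2-U3)/(Y-W)) * ((V1-V3)/(X-W)) = 0 := by
  have h1 : X - Y ≠ 0 := sub_ne_zero.mpr hxy
  have h2 : X - W ≠ 0 := sub_ne_zero.mpr hxw
  have h3 : Y - W ≠ 0 := sub_ne_zero.mpr hyw
  have key : (X-Y)⁻¹ * (X-W)⁻¹ = (X-Y)⁻¹ * (Y-W)⁻¹ - (X-W)⁻¹ * (Y-W)⁻¹ := by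
    field_simp
    ring
  simp only [div_eq_mul_inv]
  linear_combination ((U1-U2)*(V1-V3) - (U1-U3)*(V1-V2)) * key

/-- commutator of two symmetrized summands -/
def KZcomm (Ω : Fin n → Fin n → A) (z u v : Fin n → ℂ) (i j k l : Fin n) : A :=
  au Ω z u i j * au Ω z v k l - au Ω z v k l * au Ω z u i j

/-- triple summand -/
def kzF (Ω : Fin n → Fin n → A) (z u v : Fin n → ℂ) (s x y : Fin n) : A :=
  if y ≠ s ∧ y ≠ x then KZcomm Ω z u v s x s y else 0

lemma KZcomm_symm1 (Ω : Fin n → Fin n → A) (hsym : ∀ i j, Ω i j = Ω j i)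
    (z u v : Fin n → ℂ) (i j k l : Fin n) :
    KZcomm Ω z u v i j k l = KZcomm Ω z u v j i k l := by
  unfold KZcomm; rw [au_symm Ω hsym z u i j]

lemma KZcomm_symm2 (Ω : Fin n → Fin n → A) (hsym : ∀ i j, Ω i j = Ω j i)
    (z u v : Fin n → ℂ) (i j k l : Fin n) :
    KZcomm Ω z u v i j k l = KZcomm Ω z u v i j l k := by
  unfold KZcomm; rw [au_symm Ω hsym z v k l]

lemma key6 (Ω : Fin n → Fin n → A) (hsym : ∀ i j, Ω i j = Ω j i)
    (h3 : ∀ i j k : Fin n, i ≠ j → i ≠ k → j ≠ k →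
      Ω i j * (Ω i k + Ω j k) = (Ω i k + Ω j k) * Ω i j)
    (z u v : Fin n → ℂ) (hz : ∀ i j, i ≠ j → z i ≠ z j) (a b c : Fin n) :
    kzF Ω z u v a b c + kzF Ω z u v a c b + kzF Ω z u v b a c
    + kzF Ω z u v b c a + kzF Ω z u v c a b + kzF Ω z u v c b a = 0 := by
  rcases eq_or_ne a b with hab | hab
  · subst hab; simp [kzF, KZcomm, au_same]
  rcases eq_or_ne a c with hac | hac
  · subst hac; simp [kzF, KZcomm, au_same]
  rcases eq_or_ne b c with hbc | hbc
  · subst hbc; simp [kzF, KZcomm, au_same]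
  -- all distinct
  unfold kzF
  rw [if_pos ⟨hac.symm, hbc.symm⟩, if_pos ⟨hab.symm, hbc⟩, if_pos ⟨hbc.symm, hac.symm⟩,
    if_pos ⟨hab, hac⟩, if_pos ⟨hbc, hab.symm⟩, if_pos ⟨hac, hab⟩]
  unfold KZcomm
  rw [au_symm Ω hsym z u b a, au_symm Ω hsym z u c a, au_symm Ω hsym z u c b,
    au_symm Ω hsym z v b a, au_symm Ω hsym z v c a, au_symm Ω hsym z v c b]
  rw [au_eq Ω z u hab, au_eq Ω z u hac, au_eq Ω z u hbc,
    au_eq Ω z v hab, au_eq Ω z v hac, au_eq Ω z v hbc]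
  simp only [smul_comm_sub]
  have e2 : Ω a c * Ω a b - Ω a b * Ω a c = -(Ω a b * Ω a c - Ω a c * Ω a b) :=
    (neg_sub _ _).symm
  have e3 : Ω a b * Ω b c - Ω b c * Ω a b = -(Ω a b * Ω a c - Ω a c * Ω a b) :=
    comm3a Ω h3 hab hac hbc
  have e4 : Ω b c * Ω a b - Ω a b * Ω b c = Ω a b * Ω a c - Ω a c * Ω a b := by
    rw [← neg_sub, e3, neg_neg]
  have e5 : Ω a c * Ω b c - Ω b c * Ω a c = Ω a b * Ω a c - Ω a c * Ω a b :=
    comm3b Ω hsym h3 hab hac hbc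
  have e6 : Ω b c * Ω a c - Ω a c * Ω b c = -(Ω a b * Ω a c - Ω a c * Ω a b) := by
    rw [← neg_sub, e5]
  rw [e2, e3, e4, e5, e6]
  have hE := arnoldE (z a) (z b) (z c) (u a) (u b) (u c) (v a) (v b) (v c)
    (hz a b hab) (hz a c hac) (hz b c hbc)
  set C := Ω a b * Ω a c - Ω a c * Ω a b with hC
  set p := (u a - u b) / (z a - z b)
  set q := (u a - u c) / (z a - z c)
  set r := (u b - u c) / (z b - z c)
  set p' := (v a - v b) / (z a - z b)
  set q' := (v a - v c) / (z a - z c)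
  set r' := (v b - v c) / (z b - z c)
  calc (p * q') • C + (q * p') • -C + (p * r') • -C + (r * p') • C + (q * r') • C + (r * q') • -C
      = (p * q' - q * p' - p * r' + r * p' + q * r' - r * q') • C := by
        simp only [smul_neg]; module
    _ = 0 := by rw [show p * q' - q * p' - p * r' + r * p' + q * r' - r * q' = 0 from hE,
        zero_smul]

lemma sum_au (Ω : Fin n → Fin n → A) (hsym : ∀ i j, Ω i j = Ω j i) (z u : Fin n → ℂ) :
    ∑ i : Fin n, ∑ j : Fin n, au Ω z u i j = (2:ℂ) • KZform Ω z u := by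
  have point : ∀ i j : Fin n, au Ω z u i j =
      (if i < j then ((u i - u j)/(z i - z j)) • Ω i j else 0)
      + (if j < i then ((u i - u j)/(z i - z j)) • Ω i j else 0) := by
    intro i j
    rcases lt_trichotomy i j with h | h | h
    · rw [au_eq Ω z u h.ne, if_pos h, if_neg (asymm h), add_zero]
    · simp [au, h]
    · rw [au_eq Ω z u h.ne', if_neg (asymm h), if_pos h, zero_add]
  simp only [point, Finset.sum_add_distrib]
  have swap : ∑ i : Fin n, ∑ j : Fin n,
        (if j < i then ((u i - u j)/(z i - z j)) • Ω i j else 0)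
      = KZform Ω z u := by
    rw [Finset.sum_comm]
    unfold KZform
    refine Finset.sum_congr rfl fun i _ => Finset.sum_congr rfl fun j _ => ?_
    by_cases h : i < j
    · rw [if_pos h, if_pos h, hsym j i, ← neg_sub (u i), ← neg_sub (z i), neg_div_neg_eq]
    · rw [if_neg h, if_neg h]
  rw [swap, two_smul]
  rfl

lemma sum4_comm (f : Fin n → Fin n → Fin n → Fin n → A) :
    ∑ k : Fin n, ∑ l : Fin n, ∑ i : Fin n, ∑ j : Fin n, f i j k l
    = ∑ i : Fin n, ∑ j : Fin n, ∑ k : Fin n, ∑ l : Fin n, f i j k l :=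
  calc ∑ k : Fin n, ∑ l : Fin n, ∑ i : Fin n, ∑ j : Fin n, f i j k l
      = ∑ k : Fin n, ∑ i : Fin n, ∑ l : Fin n, ∑ j : Fin n, f i j k l :=
        Finset.sum_congr rfl fun k _ => Finset.sum_comm
    _ = ∑ i : Fin n, ∑ k : Fin n, ∑ l : Fin n, ∑ j : Fin n, f i j k l :=
        Finset.sum_comm
    _ = ∑ i : Fin n, ∑ k : Fin n, ∑ j : Fin n, ∑ l : Fin n, f i j k l :=
        Finset.sum_congr rfl fun i _ => Finset.sum_congr rfl fun k _ =>
          Finset.sum_comm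
    _ = ∑ i : Fin n, ∑ j : Fin n, ∑ k : Fin n, ∑ l : Fin n, f i j k l :=
        Finset.sum_congr rfl fun i _ => Finset.sum_comm

lemma sum3_swap12 (f : Fin n → Fin n → Fin n → A) :
    ∑ a : Fin n, ∑ b : Fin n, ∑ c : Fin n, f a b c
    = ∑ a : Fin n, ∑ b : Fin n, ∑ c : Fin n, f b a c :=
  Finset.sum_comm

lemma sum3_swap23 (f : Fin n → Fin n → Fin n → A) :
    ∑ a : Fin n, ∑ b : Fin n, ∑ c : Fin n, f a b c
    = ∑ a : Fin n, ∑ b : Fin n, ∑ c : Fin n, f a c b :=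
  Finset.sum_congr rfl fun a _ => Finset.sum_comm

lemma collapse1 (i : Fin n) (P : Fin n → Prop) [DecidablePred P] (X : Fin n → Fin n → A) :
    ∑ k : Fin n, ∑ l : Fin n, (if k = i ∧ P l then X k l else 0)
    = ∑ l : Fin n, if P l then X i l else 0 := by
  rw [Finset.sum_comm]
  refine Finset.sum_congr rfl fun l _ => ?_
  simp only [ite_and]
  rw [Finset.sum_ite_eq' Finset.univ i (fun k => if P l then X k l else 0)]
  simp

lemma collapse2 (j : Fin n) (Q : Fin n → Prop) [DecidablePred Q] (X : Fin n → Fin n → A) :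
    ∑ k : Fin n, ∑ l : Fin n, (if l = j ∧ Q k then X k l else 0)
    = ∑ k : Fin n, if Q k then X k j else 0 := by
  refine Finset.sum_congr rfl fun k _ => ?_
  simp only [ite_and]
  rw [Finset.sum_ite_eq' Finset.univ j (fun l => if Q k then X k l else 0)]
  simp

lemma KZcomm_zero1 (Ω : Fin n → Fin n → A) (z u v : Fin n → ℂ) (i k l : Fin n) :
    KZcomm Ω z u v i i k l = 0 := by simp [KZcomm, au_same]

lemma KZcomm_zero2 (Ω : Fin n → Fin n → A) (z u v : Fin n → ℂ) (i j k : Fin n) :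
    KZcomm Ω z u v i j k k = 0 := by simp [KZcomm, au_same]

lemma KZcomm_zero_pair (Ω : Fin n → Fin n → A) (z u v : Fin n → ℂ) (i j : Fin n) :
    KZcomm Ω z u v i j i j = 0 := by
  rcases eq_or_ne i j with h | h
  · subst h; exact KZcomm_zero1 Ω z u v i i i
  · unfold KZcomm
    rw [au_eq Ω z u h, au_eq Ω z v h, smul_mul_commute rfl, sub_self]

lemma KZcomm_zero_pair' (Ω : Fin n → Fin n → A) (hsym : ∀ i j, Ω i j = Ω j i)
    (z u v : Fin n → ℂ) (i j : Fin n) :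
    KZcomm Ω z u v i j j i = 0 := by
  rw [KZcomm_symm2 Ω hsym]; exact KZcomm_zero_pair Ω z u v i j

lemma KZcomm_zero_disj (Ω : Fin n → Fin n → A)
    (h4 : ∀ i j k l : Fin n, i ≠ j → i ≠ k → i ≠ l → j ≠ k → j ≠ l → k ≠ l →
      Ω i j * Ω k l = Ω k l * Ω i j)
    (z u v : Fin n → ℂ) {i j k l : Fin n}
    (hij : i ≠ j) (hik : i ≠ k) (hil : i ≠ l) (hjk : j ≠ k) (hjl : j ≠ l) (hkl : k ≠ l) :
    KZcomm Ω z u v i j k l = 0 := by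
  unfold KZcomm
  rw [au_eq Ω z u hij, au_eq Ω z v hkl,
    smul_mul_commute (h4 i j k l hij hik hil hjk hjl hkl), sub_self]

lemma comm_split (Ω : Fin n → Fin n → A) (hsym : ∀ i j, Ω i j = Ω j i)
    (h4 : ∀ i j k l : Fin n, i ≠ j → i ≠ k → i ≠ l → j ≠ k → j ≠ l → k ≠ l →
      Ω i j * Ω k l = Ω k l * Ω i j)
    (z u v : Fin n → ℂ) (i j k l : Fin n) :
    KZcomm Ω z u v i j k l =
      (if k = i ∧ (l ≠ i ∧ l ≠ j) then KZcomm Ω z u v i j k l else 0)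
    + (if k = j ∧ (l ≠ i ∧ l ≠ j) then KZcomm Ω z u v i j k l else 0)
    + (if l = i ∧ (k ≠ i ∧ k ≠ j) then KZcomm Ω z u v i j k l else 0)
    + (if l = j ∧ (k ≠ i ∧ k ≠ j) then KZcomm Ω z u v i j k l else 0) := by
  rcases eq_or_ne i j with hij | hij
  · subst hij; rw [KZcomm_zero1]; simp
  rcases eq_or_ne k l with hkl | hkl
  · subst hkl; rw [KZcomm_zero2]; simp
  by_cases hki : k = i
  · by_cases hlj : l = j
    · subst hki; subst hlj; rw [KZcomm_zero_pair]; simp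
    · have hli : l ≠ i := fun h => hkl (hki.trans h.symm)
      rw [if_pos ⟨hki, hli, hlj⟩, if_neg (fun h => hij (hki.symm.trans h.1)),
        if_neg (fun h => hli h.1), if_neg (fun h => hlj h.1)]
      simp
  · by_cases hkj : k = j
    · by_cases hli : l = i
      · subst hkj; subst hli; rw [KZcomm_zero_pair' Ω hsym]; simp
      · have hlj : l ≠ j := fun h => hkl (hkj.trans h.symm)
        rw [if_neg (fun h => hki h.1), if_pos ⟨hkj, hli, hlj⟩,
          if_neg (fun h => hli h.1), if_neg (fun h => hlj h.1)]
        simp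
    · by_cases hli : l = i
      · rw [if_neg (fun h => hki h.1), if_neg (fun h => hkj h.1),
          if_pos ⟨hli, hki, hkj⟩, if_neg (fun h => hij ((hli.symm.trans h.1)))]
        simp
      · by_cases hlj : l = j
        · rw [if_neg (fun h => hki h.1), if_neg (fun h => hkj h.1),
            if_neg (fun h => hli h.1), if_pos ⟨hlj, hki, hkj⟩]
          simp
        · rw [KZcomm_zero_disj Ω h4 z u v hij (Ne.symm hki) (Ne.symm hli)
            (Ne.symm hkj) (Ne.symm hlj) hkl]
          simp [hki, hkj, hli, hlj]

lemma T_zero (Ω : Fin n → Fin n → A) (hsym : ∀ i j, Ω i j = Ω j i)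
    (h3 : ∀ i j k : Fin n, i ≠ j → i ≠ k → j ≠ k →
      Ω i j * (Ω i k + Ω j k) = (Ω i k + Ω j k) * Ω i j)
    (z u v : Fin n → ℂ) (hz : ∀ i j, i ≠ j → z i ≠ z j) :
    ∑ a : Fin n, ∑ b : Fin n, ∑ c : Fin n, kzF Ω z u v a b c = 0 := by
  set T := ∑ a : Fin n, ∑ b : Fin n, ∑ c : Fin n, kzF Ω z u v a b c with hT
  have e_acb : T = ∑ a : Fin n, ∑ b : Fin n, ∑ c : Fin n, kzF Ω z u v a c b :=
    sum3_swap23 _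
  have e_bac : T = ∑ a : Fin n, ∑ b : Fin n, ∑ c : Fin n, kzF Ω z u v b a c :=
    sum3_swap12 _
  have e_bca : T = ∑ a : Fin n, ∑ b : Fin n, ∑ c : Fin n, kzF Ω z u v b c a :=
    e_acb.trans (sum3_swap12 _)
  have e_cab : T = ∑ a : Fin n, ∑ b : Fin n, ∑ c : Fin n, kzF Ω z u v c a b :=
    e_bac.trans (sum3_swap23 _)
  have e_cba : T = ∑ a : Fin n, ∑ b : Fin n, ∑ c : Fin n, kzF Ω z u v c b a :=
    e_cab.trans (sum3_swap12 _)
  have six : T + T + T + T + T + T = 0 := by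
    nth_rewrite 2 [e_acb]
    nth_rewrite 2 [e_bac]
    nth_rewrite 2 [e_bca]
    nth_rewrite 2 [e_cab]
    nth_rewrite 2 [e_cba]
    rw [hT]
    simp only [← Finset.sum_add_distrib]
    rw [Finset.sum_eq_zero]
    intro a _
    rw [Finset.sum_eq_zero]
    intro b _
    rw [Finset.sum_eq_zero]
    intro c _
    exact key6 Ω hsym h3 z u v hz a b c
  have h6 : (6:ℂ) • T = 0 := by
    have : (6:ℂ) • T = T + T + T + T + T + T := by
      rw [show (6:ℂ) = ((6:ℕ):ℂ) by norm_num, Nat.cast_smul_eq_nsmul]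
      abel
    rw [this]; exact six
  calc T = (6:ℂ)⁻¹ • ((6:ℂ) • T) := by
        rw [smul_smul, show (6:ℂ)⁻¹ * 6 = 1 by norm_num, one_smul]
    _ = 0 := by rw [h6, smul_zero]

lemma sum_KZcomm_zero (Ω : Fin n → Fin n → A) (hsym : ∀ i j, Ω i j = Ω j i)
    (h4 : ∀ i j k l : Fin n, i ≠ j → i ≠ k → i ≠ l → j ≠ k → j ≠ l → k ≠ l →
      Ω i j * Ω k l = Ω k l * Ω i j)
    (h3 : ∀ i j k : Fin n, i ≠ j → i ≠ k → j ≠ k →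
      Ω i j * (Ω i k + Ω j k) = (Ω i k + Ω j k) * Ω i j)
    (z u v : Fin n → ℂ) (hz : ∀ i j, i ≠ j → z i ≠ z j) :
    ∑ i : Fin n, ∑ j : Fin n, ∑ k : Fin n, ∑ l : Fin n, KZcomm Ω z u v i j k l = 0 := by
  have hT := T_zero Ω hsym h3 z u v hz
  calc ∑ i : Fin n, ∑ j : Fin n, ∑ k : Fin n, ∑ l : Fin n, KZcomm Ω z u v i j k l
      = ∑ i : Fin n, ∑ j : Fin n, ∑ k : Fin n, ∑ l : Fin n,
          ((if k = i ∧ (l ≠ i ∧ l ≠ j) then KZcomm Ω z u v i j k l else 0)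
          + (if k = j ∧ (l ≠ i ∧ l ≠ j) then KZcomm Ω z u v i j k l else 0)
          + (if l = i ∧ (k ≠ i ∧ k ≠ j) then KZcomm Ω z u v i j k l else 0)
          + (if l = j ∧ (k ≠ i ∧ k ≠ j) then KZcomm Ω z u v i j k l else 0)) := by
        refine Finset.sum_congr rfl fun i _ => Finset.sum_congr rfl fun j _ =>
          Finset.sum_congr rfl fun k _ => Finset.sum_congr rfl fun l _ => ?_
        exact comm_split Ω hsym h4 z u v i j k l
    _ = (∑ i : Fin n, ∑ j : Fin n, ∑ k : Fin n, ∑ l : Fin n,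
          (if k = i ∧ (l ≠ i ∧ l ≠ j) then KZcomm Ω z u v i j k l else 0))
      + (∑ i : Fin n, ∑ j : Fin n, ∑ k : Fin n, ∑ l : Fin n,
          (if k = j ∧ (l ≠ i ∧ l ≠ j) then KZcomm Ω z u v i j k l else 0))
      + (∑ i : Fin n, ∑ j : Fin n, ∑ k : Fin n, ∑ l : Fin n,
          (if l = i ∧ (k ≠ i ∧ k ≠ j) then KZcomm Ω z u v i j k l else 0))
      + (∑ i : Fin n, ∑ j : Fin n, ∑ k : Fin n, ∑ l : Fin n,
          (if l = j ∧ (k ≠ i ∧ k ≠ j) then KZcomm Ω z u v i j k l else 0)) := by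
        simp only [Finset.sum_add_distrib]
    _ = 0 := by
        have hH1 : ∑ i : Fin n, ∑ j : Fin n, ∑ k : Fin n, ∑ l : Fin n,
            (if k = i ∧ (l ≠ i ∧ l ≠ j) then KZcomm Ω z u v i j k l else 0) = 0 := by
          calc _ = ∑ i : Fin n, ∑ j : Fin n, ∑ l : Fin n, kzF Ω z u v i j l := by
                refine Finset.sum_congr rfl fun i _ => Finset.sum_congr rfl fun j _ => ?_
                rw [collapse1 i (fun l => l ≠ i ∧ l ≠ j) (fun k l => KZcomm Ω z u v i j k l)]
                simp only [kzF]
            _ = 0 := hT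
        have hH2 : ∑ i : Fin n, ∑ j : Fin n, ∑ k : Fin n, ∑ l : Fin n,
            (if k = j ∧ (l ≠ i ∧ l ≠ j) then KZcomm Ω z u v i j k l else 0) = 0 := by
          calc _ = ∑ i : Fin n, ∑ j : Fin n, ∑ l : Fin n, kzF Ω z u v j i l := by
                refine Finset.sum_congr rfl fun i _ => Finset.sum_congr rfl fun j _ => ?_
                rw [collapse1 j (fun l => l ≠ i ∧ l ≠ j) (fun k l => KZcomm Ω z u v i j k l)]
                refine Finset.sum_congr rfl fun l _ => ?_
                rw [KZcomm_symm1 Ω hsym]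
                unfold kzF
                exact if_congr and_comm rfl rfl
            _ = ∑ i : Fin n, ∑ j : Fin n, ∑ l : Fin n, kzF Ω z u v i j l :=
                (sum3_swap12 _).symm
            _ = 0 := hT
        have hH3 : ∑ i : Fin n, ∑ j : Fin n, ∑ k : Fin n, ∑ l : Fin n,
            (if l = i ∧ (k ≠ i ∧ k ≠ j) then KZcomm Ω z u v i j k l else 0) = 0 := by
          calc _ = ∑ i : Fin n, ∑ j : Fin n, ∑ k : Fin n, kzF Ω z u v i j k := by
                refine Finset.sum_congr rfl fun i _ => Finset.sum_congr rfl fun j _ => ?_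
                rw [collapse2 i (fun k => k ≠ i ∧ k ≠ j) (fun k l => KZcomm Ω z u v i j k l)]
                refine Finset.sum_congr rfl fun k _ => ?_
                rw [KZcomm_symm2 Ω hsym]
                rfl
            _ = 0 := hT
        have hH4 : ∑ i : Fin n, ∑ j : Fin n, ∑ k : Fin n, ∑ l : Fin n,
            (if l = j ∧ (k ≠ i ∧ k ≠ j) then KZcomm Ω z u v i j k l else 0) = 0 := by
          calc _ = ∑ i : Fin n, ∑ j : Fin n, ∑ k : Fin n, kzF Ω z u v j i k := by
                refine Finset.sum_congr rfl fun i _ => Finset.sum_congr rfl fun j _ => ?_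
                rw [collapse2 j (fun k => k ≠ i ∧ k ≠ j) (fun k l => KZcomm Ω z u v i j k l)]
                refine Finset.sum_congr rfl fun k _ => ?_
                rw [KZcomm_symm1 Ω hsym, KZcomm_symm2 Ω hsym]
                unfold kzF
                exact if_congr and_comm rfl rfl
            _ = ∑ i : Fin n, ∑ j : Fin n, ∑ k : Fin n, kzF Ω z u v i j k :=
                (sum3_swap12 _).symm
            _ = 0 := hT
        rw [hH1, hH2, hH3, hH4]
        simp

lemma kz_commute (Ω : Fin n → Fin n → A) (hsym : ∀ i j, Ω i j = Ω j i)
    (h4 : ∀ i j k l : Fin n, i ≠ j → i ≠ k → i ≠ l → j ≠ k → j ≠ l → k ≠ l →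
      Ω i j * Ω k l = Ω k l * Ω i j)
    (h3 : ∀ i j k : Fin n, i ≠ j → i ≠ k → j ≠ k →
      Ω i j * (Ω i k + Ω j k) = (Ω i k + Ω j k) * Ω i j)
    (z : Fin n → ℂ) (hz : ∀ i j, i ≠ j → z i ≠ z j) (u v : Fin n → ℂ) :
    KZform Ω z u * KZform Ω z v = KZform Ω z v * KZform Ω z u := by
  have expand : ((2:ℂ) • KZform Ω z u) * ((2:ℂ) • KZform Ω z v)
      - ((2:ℂ) • KZform Ω z v) * ((2:ℂ) • KZform Ω z u)
      = ∑ i : Fin n, ∑ j : Fin n, ∑ k : Fin n, ∑ l : Fin n, KZcomm Ω z u v i j k l := by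
    rw [← sum_au Ω hsym z u, ← sum_au Ω hsym z v]
    simp only [Finset.sum_mul, Finset.mul_sum]
    rw [sum4_comm (fun i j k l => au Ω z u i j * au Ω z v k l)]
    simp only [← Finset.sum_sub_distrib]
    rfl
  rw [sum_KZcomm_zero Ω hsym h4 h3 z u v hz] at expand
  have h2 := sub_eq_zero.mp expand
  rw [smul_mul_smul_comm, smul_mul_smul_comm] at h2
  have h2' := congrArg (fun t => ((2:ℂ)*2)⁻¹ • t) h2
  simp only [smul_smul] at h2'
  rw [show ((2:ℂ)*2)⁻¹ * ((2:ℂ)*2) = 1 by norm_num] at h2'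
  simp only [one_smul] at h2'
  exact h2'

lemma kz_fderiv (Ω : Fin n → Fin n → A) (z : Fin n → ℂ)
    (hz : ∀ i j, i ≠ j → z i ≠ z j) (u v : Fin n → ℂ) :
    fderiv ℂ (fun w => KZform Ω w u) z v
      = ∑ i : Fin n, ∑ j : Fin n, (if i < j then
          ((-((z i - z j) ^ 2)⁻¹ * (u i - u j) * (v i - v j))) • Ω i j else 0) := by
  have hD : HasFDerivAt (fun w => KZform Ω w u)
      (∑ i : Fin n, ∑ j : Fin n, (if i < j then
        (((u i - u j) • ((-((z i - z j) ^ 2)⁻¹) •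
          ((ContinuousLinearMap.proj i : (Fin n → ℂ) →L[ℂ] ℂ) - ContinuousLinearMap.proj j))).smulRight (Ω i j))
        else 0)) z := by
    unfold KZform
    apply HasFDerivAt.fun_sum
    intro i _
    apply HasFDerivAt.fun_sum
    intro j _
    by_cases h : i < j
    · simp only [if_pos h]
      have h1 : HasFDerivAt (fun w : Fin n → ℂ => w i - w j)
          ((ContinuousLinearMap.proj i : (Fin n → ℂ) →L[ℂ] ℂ) - ContinuousLinearMap.proj j) z :=
        (hasFDerivAt_apply i z).sub (hasFDerivAt_apply j z)
      have hne : z i - z j ≠ 0 := sub_ne_zero.mpr (hz i j h.ne)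
      have h2 : HasFDerivAt (fun w : Fin n → ℂ => (w i - w j)⁻¹)
          ((-((z i - z j) ^ 2)⁻¹) •
            ((ContinuousLinearMap.proj i : (Fin n → ℂ) →L[ℂ] ℂ) - ContinuousLinearMap.proj j)) z :=
        (hasDerivAt_inv hne).comp_hasFDerivAt z h1
      have h3 := (h2.const_mul (u i - u j)).smul_const (Ω i j)
      simpa only [div_eq_mul_inv] using h3
    · simp only [if_neg h]
      exact hasFDerivAt_const 0 z
  rw [hD.fderiv]
  simp only [ContinuousLinearMap.sum_apply]
  refine Finset.sum_congr rfl fun i _ => Finset.sum_congr rfl fun j _ => ?_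
  by_cases h : i < j
  · simp only [if_pos h, ContinuousLinearMap.smulRight_apply, ContinuousLinearMap.smul_apply,
      ContinuousLinearMap.sub_apply, ContinuousLinearMap.proj_apply, smul_eq_mul, smul_smul]
    ring_nf
  · simp [h]

/-- Flatness of the KZ connection: if the `Ω i j = Ω j i` satisfy the infinitesimal
braid relations `[Ω i j, Ω k l] = 0` (`i,j,k,l` pairwise distinct) and
`[Ω i j, Ω i k + Ω j k] = 0` (`i,j,k` distinct), then on configuration space
(`z i ≠ z j` for `i ≠ j`) the 1-form `Γ` is closed —
`dΓ(u,v) = (D_v Γ(·)(u) - D_u Γ(·)(v))(z) = 0` — and satisfies `Γ ∧ Γ = 0`, i.e.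
`Γ_z(u)` and `Γ_z(v)` commute for all tangent vectors `u, v`. -/
theorem kz_connection_flat
    (Ω : Fin n → Fin n → A)
    (hsym : ∀ i j, Ω i j = Ω j i)
    (h4 : ∀ i j k l : Fin n, i ≠ j → i ≠ k → i ≠ l → j ≠ k → j ≠ l → k ≠ l →
      Ω i j * Ω k l = Ω k l * Ω i j)
    (h3 : ∀ i j k : Fin n, i ≠ j → i ≠ k → j ≠ k →
      Ω i j * (Ω i k + Ω j k) = (Ω i k + Ω j k) * Ω i j)
    (z : Fin n → ℂ) (hz : ∀ i j, i ≠ j → z i ≠ z j) :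
    (∀ u v : Fin n → ℂ,
      fderiv ℂ (fun w => KZform Ω w u) z v = fderiv ℂ (fun w => KZform Ω w v) z u) ∧
    (∀ u v : Fin n → ℂ, KZform Ω z u * KZform Ω z v = KZform Ω z v * KZform Ω z u) := by
  constructor
  · intro u v
    rw [kz_fderiv Ω z hz u v, kz_fderiv Ω z hz v u]
    refine Finset.sum_congr rfl fun i _ => Finset.sum_congr rfl fun j _ => ?_
    by_cases h : i < j
    · rw [if_pos h, if_pos h]
      congr 1
      ring
    · rw [if_neg h, if_neg h]
  · intro u v
    exact kz_commute Ω hsym h4 h3 z hz u v
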